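/- Fix integers V ≥ 2, d_x ≥ 1 and d_c ≥ 0, set d = d_x + d_c, identify the alphabet with Fin V with a distinguished mask symbol M, and for t > 0 let K_t be the masking channel on Fin V given by K_t(·|M) = δ_M and, for x ≠ M, K_t(y|x) = e^{−t} δ_{y=x} + (1 − e^{−t}) δ_{y=M}. Fix condition symbols c_1, …, c_{d_c} ∈ Fin V, and let q_0 be a probability mass function on (Fin V)^d supported on sequences whose last d_c coordinates equal (c_1, …, c_{d_c}). Let q_t be obtained from q_0 by applying K_t independently to each of the first d_x coordinates and the identity channel to the last d_c coordinates, i.e. q_t(y) = Σ_x q_0(x) ∏_{i=1}^{d_x} K_t(y_i | x_i) · ∏_{j=1}^{d_c} δ_{y_{d_x+j} = x_{d_x+j}}. Let p_init be the product distribution whose first d_x coordinates are each ν_{e^{−t}}, where ν_ε(M) = 1 − ε and ν_ε(j) = ε/(V−1) for j ≠ M, and whose last d_c coordinates are the point masses δ_{c_1}, …, δ_{c_{d_c}}. Then for every t ≥ log 2, KL(q_t ‖ p_init) ≤ d_x · e^{−t} · (log(V − 1) + 2). -/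

import Mathlib

open Finset

/-- The masking channel of a masked diffusion model at time `t`: a mask token stays
masked; a non-mask token `x` survives with probability `e⁻ᵗ` and is replaced by the
mask symbol `M` with probability `1 - e⁻ᵗ`. -/
noncomputable def maskKernel (V : ℕ) (M : Fin V) (t : ℝ) (x y : Fin V) : ℝ :=
  if x = M then (if y = M then 1 else 0)
  else if y = x then Real.exp (-t) else if y = M then 1 - Real.exp (-t) else 0

/-- The non-stationary per-token initialization distribution of Assumption A.1:
mass `1 - ε` on the mask symbol and mass `ε` spread uniformly over the other
`V - 1` symbols. -/
noncomputable def nuEps (V : ℕ) (M : Fin V) (ε : ℝ) (y : Fin V) : ℝ :=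
  if y = M then 1 - ε else ε / ((V : ℝ) - 1)

/-!
`q_t` is the mixture, over clean sequences `x ∼ q₀`, of the product channels
`K_x(y) = ∏ᵢ K_t(yᵢ | xᵢ) · ∏ⱼ δ(y_{dx+j} = x_{dx+j})`, and `p_init` is a product distribution too.
By the log-sum inequality KL is jointly convex, so `KL(q_t ‖ p_init) ≤ E_{x∼q₀} KL(K_x ‖ p_init)`.
On the support of `q₀` the condition coordinates of `x` are `c`, so the condition factors of
`K_x` and `p_init` agree, and KL of products is the sum of the coordinatewise KLs: only the
`dx` answer coordinates contribute, each with `KL(K_t(· | xᵢ) ‖ ν_ε)`, `ε = e⁻ᵗ`. That is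
`ε log (V - 1)` for `xᵢ ≠ M` and `-log (1 - ε) ≤ 2ε` for `xᵢ = M`, as `ε ≤ 1/2`.
-/

open Real

/-- Since `x / 0 = 0` and `log 0 = 0`, terms with `p a = 0` vanish (the convention `0 log 0 = 0`),
but so do terms with `q a = 0 < p a`: this is the KL divergence only when `p ≪ q`. -/
noncomputable def discreteKL {α : Type*} [Fintype α] (p q : α → ℝ) : ℝ :=
  ∑ a, p a * log (p a / q a)

theorem sub_le_mul_log_div {x y : ℝ} (hx : 0 ≤ x) (hy : 0 < y) : x - y ≤ x * log (x / y) := by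
  have h := mul_le_mul_of_nonneg_left (self_sub_one_le_mul_log (div_nonneg hx hy.le)) hy.le
  calc x - y = y * (x / y - 1) := by field_simp
    _ ≤ y * (x / y * log (x / y)) := h
    _ = x * log (x / y) := by field_simp

theorem mul_log_add_sub_le_mul_log_div {a b r : ℝ} (ha : 0 ≤ a) (hb : 0 ≤ b) (hab : b = 0 → a = 0)
    (hr : 0 < r) : a * log r + a - b * r ≤ a * log (a / b) := by
  rcases ha.eq_or_lt with rfl | ha
  · simpa using mul_nonneg hb hr.le
  have hb : 0 < b := hb.lt_of_ne fun h => ha.ne' (hab h.symm)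
  have h := sub_le_mul_log_div ha.le (mul_pos hb hr)
  rw [div_mul_eq_div_div, log_div (by positivity) hr.ne'] at h
  linarith

/-- The log-sum inequality. -/
theorem sum_mul_log_sum_div_le {ι : Type*} (s : Finset ι) (a b : ι → ℝ)
    (ha : ∀ i ∈ s, 0 ≤ a i) (hb : ∀ i ∈ s, 0 ≤ b i) (hab : ∀ i ∈ s, b i = 0 → a i = 0) :
    (∑ i ∈ s, a i) * log ((∑ i ∈ s, a i) / ∑ i ∈ s, b i) ≤ ∑ i ∈ s, a i * log (a i / b i) := by
  by_cases hA : ∑ i ∈ s, a i = 0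
  · have ha0 := (sum_eq_zero_iff_of_nonneg ha).1 hA
    rw [hA, zero_mul, sum_eq_zero fun i hi => by rw [ha0 i hi, zero_mul]]
  have hA : 0 < ∑ i ∈ s, a i := (sum_nonneg ha).lt_of_ne' hA
  have hB : 0 < ∑ i ∈ s, b i := (sum_nonneg hb).lt_of_ne' fun hB => hA.ne' <|
    sum_eq_zero fun i hi => hab i hi ((sum_eq_zero_iff_of_nonneg hb).1 hB i hi)
  set r := (∑ i ∈ s, a i) / ∑ i ∈ s, b i
  calc (∑ i ∈ s, a i) * log r = ∑ i ∈ s, (a i * log r + a i - b i * r) := by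
        rw [sum_sub_distrib, sum_add_distrib, ← sum_mul, ← sum_mul, mul_div_cancel₀ _ hB.ne']
        ring
    _ ≤ ∑ i ∈ s, a i * log (a i / b i) := sum_le_sum fun i hi =>
        mul_log_add_sub_le_mul_log_div (ha i hi) (hb i hi) (hab i hi) (div_pos hA hB)

theorem discreteKL_self {α : Type*} [Fintype α] (p : α → ℝ) : discreteKL p p = 0 :=
  sum_eq_zero fun a _ => by by_cases h : p a = 0 <;> simp [h]

theorem discreteKL_mixture_le {ξ α : Type*} [Fintype ξ] [Fintype α] (w : ξ → ℝ) (P : ξ → α → ℝ)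
    (q : α → ℝ) (hw0 : ∀ x, 0 ≤ w x) (hw1 : ∑ x, w x = 1) (hP : ∀ x a, 0 ≤ P x a)
    (hq : ∀ a, 0 ≤ q a) (hPq : ∀ x, w x ≠ 0 → ∀ a, q a = 0 → P x a = 0) :
    discreteKL (fun a => ∑ x, w x * P x a) q ≤ ∑ x, w x * discreteKL (P x) q := by
  have pointwise (a : α) : (∑ x, w x * P x a) * log ((∑ x, w x * P x a) / q a) ≤
      ∑ x, w x * (P x a * log (P x a / q a)) := by
    have h := sum_mul_log_sum_div_le univ (fun x => w x * P x a) (fun x => w x * q a)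
      (fun x _ => mul_nonneg (hw0 x) (hP x a)) (fun x _ => mul_nonneg (hw0 x) (hq a))
      (fun x _ hx => by
        rcases mul_eq_zero.1 hx with h | h
        · simp [h]
        · by_cases hwx : w x = 0
          · simp [hwx]
          · simp [hPq x hwx a h])
    rw [← sum_mul, hw1, one_mul] at h
    refine h.trans_eq (sum_congr rfl fun x _ => ?_)
    by_cases hwx : w x = 0
    · simp [hwx]
    · rw [mul_div_mul_left _ _ hwx, mul_assoc]
  calc discreteKL (fun a => ∑ x, w x * P x a) q
      ≤ ∑ a, ∑ x, w x * (P x a * log (P x a / q a)) := sum_le_sum fun a _ => pointwise a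
    _ = ∑ x, w x * discreteKL (P x) q := by
        rw [sum_comm]
        simp only [discreteKL, mul_sum]

theorem sum_prod_mul_apply {ι α R : Type*} [Fintype ι] [DecidableEq ι] [Fintype α]
    [CommSemiring R] (f : ι → α → R) (hf : ∀ j, ∑ a, f j a = 1) (i : ι) (h : α → R) :
    ∑ y : ι → α, (∏ j, f j (y j)) * h (y i) = ∑ a, f i a * h a := by
  -- Replacing the `i`-th factor by `f i * h` makes the summand a product, so the sum factors.
  set F := Function.update f i fun a => f i a * h a
  have hF (y : ι → α) : ∏ j, F j (y j) = (∏ j, f j (y j)) * h (y i) := by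
    have : (fun j => F j (y j)) = Function.update (fun j => f j (y j)) i (f i (y i) * h (y i)) := by
      funext j
      rcases eq_or_ne j i with rfl | hj <;> simp [F, *]
    rw [this, prod_update_of_mem (mem_univ i), ← mul_prod_erase univ _ (mem_univ i),
      sdiff_singleton_eq_erase]
    ring
  simp_rw [← hF, ← Fintype.prod_sum]
  rw [prod_eq_single i (fun j _ hj => by simp [F, hj, hf]) (by simp)]
  simp [F]

theorem discreteKL_pi {ι α : Type*} [Fintype ι] [DecidableEq ι] [Fintype α] (f g : ι → α → ℝ)
    (hf : ∀ i, ∑ a, f i a = 1) (hfg : ∀ i a, g i a = 0 → f i a = 0) :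
    discreteKL (fun y : ι → α => ∏ i, f i (y i)) (fun y => ∏ i, g i (y i)) =
      ∑ i, discreteKL (f i) (g i) := by
  have expand (y : ι → α) : (∏ i, f i (y i)) * log ((∏ i, f i (y i)) / ∏ i, g i (y i)) =
      ∑ i, (∏ j, f j (y j)) * log (f i (y i) / g i (y i)) := by
    by_cases h : ∃ i, f i (y i) = 0
    · obtain ⟨i, hi⟩ := h
      simp [prod_eq_zero (f := fun i => f i (y i)) (mem_univ i) hi]
    push Not at h
    rw [← prod_div_distrib, log_prod fun i _ => div_ne_zero (h i) (mt (hfg i (y i)) (h i)),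
      mul_sum]
  simp only [discreteKL, expand]
  rw [sum_comm]
  exact sum_congr rfl fun i _ => sum_prod_mul_apply f hf i fun a => log (f i a / g i a)

theorem neg_log_one_sub_le_two_mul {ε : ℝ} (h0 : 0 ≤ ε) (h1 : ε ≤ 1 / 2) :
    -log (1 - ε) ≤ 2 * ε := by
  have hpos : 0 < 1 - ε := by linarith
  have h := one_sub_inv_le_log_of_pos hpos
  have : (1 - ε)⁻¹ ≤ 1 + 2 * ε := by
    rw [inv_le_iff_one_le_mul₀ hpos]
    nlinarith
  linarith

section maskKernel

variable {V : ℕ} (M : Fin V)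

theorem maskKernel_nonneg {t : ℝ} (ht : 0 ≤ t) (x y : Fin V) : 0 ≤ maskKernel V M t x y := by
  have : exp (-t) ≤ 1 := exp_le_one_iff.2 (by linarith)
  unfold maskKernel
  split_ifs <;> linarith [exp_pos (-t)]

theorem sum_maskKernel (t : ℝ) (x : Fin V) : ∑ y, maskKernel V M t x y = 1 := by
  unfold maskKernel
  split_ifs with hx
  · simp
  · rw [Fintype.sum_eq_add x M hx fun y hy => by simp [hy.1, hy.2]]
    simp [Ne.symm hx]

theorem nuEps_pos (hV : 2 ≤ V) {ε : ℝ} (h0 : 0 < ε) (h1 : ε < 1) (y : Fin V) :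
    0 < nuEps V M ε y := by
  have : (1 : ℝ) < V := by exact_mod_cast hV
  unfold nuEps
  split_ifs <;> [linarith; exact div_pos h0 (by linarith)]

theorem discreteKL_maskKernel_mask (t : ℝ) :
    discreteKL (maskKernel V M t M) (nuEps V M (exp (-t))) = -log (1 - exp (-t)) := by
  rw [discreteKL, sum_eq_single M (fun y _ hy => by simp [maskKernel, hy]) (by simp)]
  simp [maskKernel, nuEps]

theorem discreteKL_maskKernel_of_ne (t : ℝ) {x : Fin V} (hx : x ≠ M) :
    discreteKL (maskKernel V M t x) (nuEps V M (exp (-t))) = exp (-t) * log (V - 1) := by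
  rw [discreteKL, Fintype.sum_eq_add x M hx fun y hy => by simp [maskKernel, hx, hy.1, hy.2]]
  simp [maskKernel, nuEps, hx, Ne.symm hx, div_div_cancel₀ (exp_pos (-t)).ne']

theorem discreteKL_maskKernel_le (hV : 2 ≤ V) {t : ℝ} (ht : log 2 ≤ t) (x : Fin V) :
    discreteKL (maskKernel V M t x) (nuEps V M (exp (-t))) ≤ exp (-t) * (log (V - 1) + 2) := by
  have hlogV : 0 ≤ log ((V : ℝ) - 1) := log_nonneg (le_sub_iff_add_le.2 (by exact_mod_cast hV))
  have hε : exp (-t) ≤ 1 / 2 := by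
    calc exp (-t) ≤ exp (-log 2) := exp_le_exp.2 (neg_le_neg ht)
      _ = 1 / 2 := by rw [exp_neg, exp_log two_pos, one_div]
  by_cases hx : x = M
  · rw [hx, discreteKL_maskKernel_mask M t]
    nlinarith [neg_log_one_sub_le_two_mul (exp_pos (-t)).le hε, mul_nonneg (exp_pos (-t)).le hlogV]
  · rw [discreteKL_maskKernel_of_ne M t hx]
    nlinarith [exp_pos (-t)]

end maskKernel

def pointMass {α : Type*} [DecidableEq α] (a v : α) : ℝ := if v = a then 1 else 0

theorem pointMass_nonneg {α : Type*} [DecidableEq α] (a v : α) : 0 ≤ pointMass a v := by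
  unfold pointMass; split_ifs <;> norm_num

theorem sum_pointMass {α : Type*} [Fintype α] [DecidableEq α] (a : α) : ∑ v, pointMass a v = 1 := by
  simp [pointMass]

section conditioned

variable {V dx dc : ℕ} (M : Fin V)

/-- The factors of `K_x`, coordinate by coordinate. -/
noncomputable def forwardKernel (t : ℝ) (x : Fin (dx + dc) → Fin V) :
    Fin (dx + dc) → Fin V → ℝ :=
  Fin.addCases (fun i => maskKernel V M t (x (Fin.castAdd dc i)))
    (fun j => pointMass (x (Fin.natAdd dx j)))

/-- The factors of `p_init`, coordinate by coordinate. -/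
noncomputable def initMarginal (ε : ℝ) (c : Fin dc → Fin V) : Fin (dx + dc) → Fin V → ℝ :=
  Fin.addCases (fun _ => nuEps V M ε) (fun j => pointMass (c j))

@[simp]
theorem forwardKernel_castAdd (t : ℝ) (x : Fin (dx + dc) → Fin V) (i : Fin dx) :
    forwardKernel M t x (Fin.castAdd dc i) = maskKernel V M t (x (Fin.castAdd dc i)) :=
  Fin.addCases_left i

@[simp]
theorem forwardKernel_natAdd (t : ℝ) (x : Fin (dx + dc) → Fin V) (j : Fin dc) :
    forwardKernel M t x (Fin.natAdd dx j) = pointMass (x (Fin.natAdd dx j)) :=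
  Fin.addCases_right j

@[simp]
theorem initMarginal_castAdd (ε : ℝ) (c : Fin dc → Fin V) (i : Fin dx) :
    initMarginal M ε c (Fin.castAdd dc i) = nuEps V M ε :=
  Fin.addCases_left i

@[simp]
theorem initMarginal_natAdd (ε : ℝ) (c : Fin dc → Fin V) (j : Fin dc) :
    initMarginal (dx := dx) M ε c (Fin.natAdd dx j) = pointMass (c j) :=
  Fin.addCases_right j

theorem forwardKernel_nonneg {t : ℝ} (ht : 0 ≤ t) (x : Fin (dx + dc) → Fin V) (k : Fin (dx + dc))
    (v : Fin V) : 0 ≤ forwardKernel M t x k v := by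
  induction k using Fin.addCases <;> simp only [forwardKernel_castAdd, forwardKernel_natAdd]
  · exact maskKernel_nonneg M ht _ _
  · exact pointMass_nonneg _ _

theorem sum_forwardKernel (t : ℝ) (x : Fin (dx + dc) → Fin V) (k : Fin (dx + dc)) :
    ∑ v, forwardKernel M t x k v = 1 := by
  induction k using Fin.addCases <;> simp only [forwardKernel_castAdd, forwardKernel_natAdd]
  · exact sum_maskKernel M t _
  · exact sum_pointMass _

theorem initMarginal_nonneg (hV : 2 ≤ V) {ε : ℝ} (h0 : 0 < ε) (h1 : ε < 1) (c : Fin dc → Fin V)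
    (k : Fin (dx + dc)) (v : Fin V) : 0 ≤ initMarginal M ε c k v := by
  induction k using Fin.addCases <;> simp only [initMarginal_castAdd, initMarginal_natAdd]
  · exact (nuEps_pos M hV h0 h1 _).le
  · exact pointMass_nonneg _ _

theorem forwardKernel_eq_zero_of_initMarginal (hV : 2 ≤ V) {t : ℝ} (ht : 0 < t)
    {c : Fin dc → Fin V} {x : Fin (dx + dc) → Fin V} (hx : ∀ j, x (Fin.natAdd dx j) = c j)
    (k : Fin (dx + dc)) (v : Fin V) (hk : initMarginal M (exp (-t)) c k v = 0) :
    forwardKernel M t x k v = 0 := by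
  induction k using Fin.addCases <;> simp only [forwardKernel_castAdd, forwardKernel_natAdd,
    initMarginal_castAdd, initMarginal_natAdd] at *
  · exact absurd hk (nuEps_pos M hV (exp_pos _) (exp_lt_one_iff.2 (neg_lt_zero.2 ht)) _).ne'
  · simpa [pointMass, hx] using hk

theorem discreteKL_forwardKernel_le (hV : 2 ≤ V) {t : ℝ} (ht : log 2 ≤ t) {c : Fin dc → Fin V}
    {x : Fin (dx + dc) → Fin V} (hx : ∀ j, x (Fin.natAdd dx j) = c j) :
    discreteKL (fun y : Fin (dx + dc) → Fin V => ∏ k, forwardKernel M t x k (y k))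
        (fun y => ∏ k, initMarginal M (exp (-t)) c k (y k)) ≤
      dx * exp (-t) * (log (V - 1) + 2) := by
  have ht0 : 0 < t := (log_pos one_lt_two).trans_le ht
  rw [discreteKL_pi _ _ (sum_forwardKernel M t x)
    (forwardKernel_eq_zero_of_initMarginal M hV ht0 hx), Fin.sum_univ_add]
  simp only [forwardKernel_castAdd, forwardKernel_natAdd, initMarginal_castAdd,
    initMarginal_natAdd, hx, discreteKL_self, sum_const_zero, add_zero]
  calc ∑ i : Fin dx, discreteKL (maskKernel V M t (x (Fin.castAdd dc i))) (nuEps V M (exp (-t)))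
      ≤ ∑ _i : Fin dx, exp (-t) * (log (V - 1) + 2) :=
        sum_le_sum fun i _ => discreteKL_maskKernel_le M hV ht _
    _ = dx * exp (-t) * (log (V - 1) + 2) := by simp [mul_assoc]

end conditioned

theorem kl_conditioned_corrupted_le_explicit_general
    {V dx dc : ℕ} (hV : 2 ≤ V) (M : Fin V) (t : ℝ)
    (ht : Real.log 2 ≤ t)
    (c : Fin dc → Fin V)
    (q0 : (Fin (dx + dc) → Fin V) → ℝ)
    (hq00 : ∀ x, 0 ≤ q0 x) (hq01 : ∑ x, q0 x = 1)
    (hsupp : ∀ x, q0 x ≠ 0 → ∀ j : Fin dc, x (Fin.natAdd dx j) = c j) :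
    ∑ y : Fin (dx + dc) → Fin V,
        (∑ x, q0 x *
            ((∏ i : Fin dx, maskKernel V M t (x (Fin.castAdd dc i)) (y (Fin.castAdd dc i))) *
              ∏ j : Fin dc, (if y (Fin.natAdd dx j) = x (Fin.natAdd dx j) then (1 : ℝ) else 0))) *
          Real.log
            ((∑ x, q0 x *
                ((∏ i : Fin dx, maskKernel V M t (x (Fin.castAdd dc i)) (y (Fin.castAdd dc i))) *
                  ∏ j : Fin dc, (if y (Fin.natAdd dx j) = x (Fin.natAdd dx j) then (1 : ℝ) else 0))) /
              ((∏ i : Fin dx, nuEps V M (Real.exp (-t)) (y (Fin.castAdd dc i))) *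
                ∏ j : Fin dc, (if y (Fin.natAdd dx j) = c j then (1 : ℝ) else 0))) ≤
      (dx : ℝ) * Real.exp (-t) * (Real.log ((V : ℝ) - 1) + 2) := by
  have ht0 : 0 < t := (log_pos one_lt_two).trans_le ht
  have hε1 : exp (-t) < 1 := exp_lt_one_iff.2 (neg_lt_zero.2 ht0)
  calc _ = discreteKL (fun y : Fin (dx + dc) → Fin V => ∑ x, q0 x * ∏ k, forwardKernel M t x k (y k))
        (fun y => ∏ k, initMarginal M (exp (-t)) c k (y k)) := by
        simp only [discreteKL, Fin.prod_univ_add, forwardKernel_castAdd, forwardKernel_natAdd,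
          initMarginal_castAdd, initMarginal_natAdd, pointMass]
    _ ≤ ∑ x, q0 x * discreteKL (fun y : Fin (dx + dc) → Fin V => ∏ k, forwardKernel M t x k (y k))
        (fun y => ∏ k, initMarginal M (exp (-t)) c k (y k)) := by
        refine discreteKL_mixture_le _ _ _ hq00 hq01
          (fun x y => prod_nonneg fun k _ => forwardKernel_nonneg M ht0.le x k _)
          (fun y => prod_nonneg fun k _ => initMarginal_nonneg M hV (exp_pos _) hε1 c k _)
          fun x hx y hy => ?_
        obtain ⟨k, -, hk⟩ := prod_eq_zero_iff.1 hy
        exact prod_eq_zero (mem_univ k)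
          (forwardKernel_eq_zero_of_initMarginal M hV ht0 (hsupp x hx) k _ hk)
    _ ≤ ∑ x, q0 x * (dx * exp (-t) * (log (V - 1) + 2)) := by
        refine sum_le_sum fun x _ => ?_
        rcases eq_or_ne (q0 x) 0 with hx | hx
        · simp [hx]
        · exact mul_le_mul_of_nonneg_left
            (discreteKL_forwardKernel_le M hV ht (hsupp x hx)) (hq00 x)
    _ = dx * exp (-t) * (log (V - 1) + 2) := by rw [← sum_mul, hq01, one_mul]

/-- Conditioned form of Lemma A.2: the forward masking process corrupts only the
first `d_x` (answer) coordinates while the last `d_c` (condition) coordinates,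
fixed to the known condition symbols `c`, are left untouched; then
`KL(q_t ‖ p_init) ≤ d_x · e⁻ᵗ · (log (V - 1) + 2)` once `t ≥ log 2`. -/
theorem kl_conditioned_corrupted_le_explicit
    {V dx dc : ℕ} (hV : 2 ≤ V) (hdx : 1 ≤ dx) (M : Fin V) (t : ℝ)
    (ht : Real.log 2 ≤ t)
    (c : Fin dc → Fin V)
    (q0 : (Fin (dx + dc) → Fin V) → ℝ)
    (hq00 : ∀ x, 0 ≤ q0 x) (hq01 : ∑ x, q0 x = 1)
    (hsupp : ∀ x, q0 x ≠ 0 → ∀ j : Fin dc, x (Fin.natAdd dx j) = c j) :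
    ∑ y : Fin (dx + dc) → Fin V,
        (∑ x, q0 x *
            ((∏ i : Fin dx, maskKernel V M t (x (Fin.castAdd dc i)) (y (Fin.castAdd dc i))) *
              ∏ j : Fin dc, (if y (Fin.natAdd dx j) = x (Fin.natAdd dx j) then (1 : ℝ) else 0))) *
          Real.log
            ((∑ x, q0 x *
                ((∏ i : Fin dx, maskKernel V M t (x (Fin.castAdd dc i)) (y (Fin.castAdd dc i))) *
                  ∏ j : Fin dc, (if y (Fin.natAdd dx j) = x (Fin.natAdd dx j) then (1 : ℝ) else 0))) /
              ((∏ i : Fin dx, nuEps V M (Real.exp (-t)) (y (Fin.castAdd dc i))) *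
                ∏ j : Fin dc, (if y (Fin.natAdd dx j) = c j then (1 : ℝ) else 0))) ≤
      (dx : ℝ) * Real.exp (-t) * (Real.log ((V : ℝ) - 1) + 2) :=
  kl_conditioned_corrupted_le_explicit_general hV M t ht c q0 hq00 hq01 hsupp
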